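/- Let V be a horizontal vertex set in an augmented tree. If the horizontal unit ball B_hor(v,1) is contained in V, then for every letter x ∈ X, the cone C_{xv} is contained in the umbra U(V). -/

import Mathlib

/-- An augmented tree on the words `X*`: the tree of words (with vertical edges from
`v` to `xv`) augmented by a set of horizontal edges joining words of equal length, such
that the endpoints of a horizontal edge have truncations (deleting the first letter)
which either coincide or are again joined by a horizontal edge. -/
structure AugmentedTree (X : Type*) where
  horiz : List X → List X → Prop
  horiz_symm : ∀ u v, horiz u v → horiz v u
  horiz_irrefl : ∀ u, ¬ horiz u u
  horiz_length : ∀ u v, horiz u v → u.length = v.length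
  horiz_push : ∀ (x y : X) (u v : List X), horiz (x :: u) (y :: v) → u = v ∨ horiz u v

/-- The graph of an augmented tree: vertical tree edges together with horizontal edges. -/
def AugmentedTree.graph {X : Type*} (T : AugmentedTree X) : SimpleGraph (List X) where
  Adj u v := T.horiz u v ∨ (∃ x : X, v = x :: u) ∨ (∃ x : X, u = x :: v)
  symm := by
    constructor
    intro u v h
    rcases h with h | ⟨x, rfl⟩ | ⟨x, rfl⟩
    · exact Or.inl (T.horiz_symm u v h)
    · exact Or.inr (Or.inr ⟨x, rfl⟩)
    · exact Or.inr (Or.inl ⟨x, rfl⟩)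
  loopless := by
    constructor
    intro u h
    rcases h with h | ⟨x, hx⟩ | ⟨x, hx⟩
    · exact T.horiz_irrefl u h
    · have := congrArg List.length hx; simp at this
    · have := congrArg List.length hx; simp at this

/-- The cone over a word `v`: the set of words ending in `v`. -/
def Cone {X : Type*} (v : List X) : Set (List X) := {u | ∃ w : List X, u = w ++ v}

/-- The vertex set of the shadow `S(V)`: the union of the cones over elements of `V`. -/
def shadowSet {X : Type*} (V : Set (List X)) : Set (List X) := ⋃ v ∈ V, Cone v

/-- The umbra `U(V)`: the set of vertices of the shadow `S(V)` at distance greater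
than 1 from the complement of `S(V)`. -/
def umbraSet {X : Type*} (T : AugmentedTree X) (V : Set (List X)) : Set (List X) :=
  {u | u ∈ shadowSet V ∧ ∀ y : List X, y ∉ shadowSet V → 2 ≤ T.graph.dist u y}

/-!
A word `w ++ x :: v` of the cone `C_{xv}` lies in the shadow of `v`, and so do its two kinds
of vertical neighbours, since deleting or adding a first letter keeps at least the suffix `v`.
A horizontal neighbour is, by truncating both words letter by letter down to the level of `v`,
a word of the cone over `v` itself or over a horizontal neighbour of `v`; both lie in `V`.
So every vertex at distance at most one from the cone lies in `S(V)`.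
-/

namespace Cone

variable {X : Type*}

theorem cons_mem {v u : List X} (a : X) (hu : u ∈ Cone v) : a :: u ∈ Cone v := by
  obtain ⟨w, rfl⟩ := hu
  exact ⟨a :: w, rfl⟩

theorem of_cons_mem_cons {x a : X} {v y : List X} (h : a :: y ∈ Cone (x :: v)) :
    y ∈ Cone v := by
  obtain ⟨w, hw⟩ := h
  cases w with
  | nil => exact ⟨[], (List.cons.inj hw).2⟩
  | cons b w => exact ⟨w ++ [x], by simpa using (List.cons.inj hw).2⟩

theorem cons_subset (x : X) (v : List X) : Cone (x :: v) ⊆ Cone v := by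
  rintro _ ⟨w, rfl⟩
  exact ⟨w ++ [x], by simp⟩

theorem subset_shadowSet {V : Set (List X)} {v : List X} (hv : v ∈ V) :
    Cone v ⊆ shadowSet V :=
  Set.subset_biUnion_of_mem (u := Cone) hv

end Cone

theorem shadowSet_mono {X : Type*} {V W : Set (List X)} (h : V ⊆ W) :
    shadowSet V ⊆ shadowSet W :=
  Set.biUnion_subset_biUnion_left h

namespace AugmentedTree

variable {X : Type*} (T : AugmentedTree X)

/-- The horizontal unit ball `B_hor(v, 1)`. -/
def horizBall (v : List X) : Set (List X) :=
  {w | w.length = v.length ∧ T.graph.dist v w ≤ 1}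

theorem mem_horizBall_of_eq_or_horiz {v t : List X} (h : t = v ∨ T.horiz v t) :
    t ∈ T.horizBall v := by
  rcases h with rfl | h
  · exact ⟨rfl, by simp⟩
  · exact ⟨(T.horiz_length _ _ h).symm, (SimpleGraph.dist_eq_one_iff_adj.mpr (Or.inl h)).le⟩

theorem graph_connected : T.graph.Connected := by
  have reachable_nil : ∀ u : List X, T.graph.Reachable u [] := by
    intro u
    induction u with
    | nil => rfl
    | cons a u ih => exact (SimpleGraph.Adj.reachable (Or.inr (Or.inr ⟨a, rfl⟩))).trans ih
  exact ⟨fun u w => (reachable_nil u).trans (reachable_nil w).symm⟩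

theorem exists_mem_cone_of_horiz {u y v : List X} (hu : u ∈ Cone v) (h : T.horiz u y) :
    ∃ t, y ∈ Cone t ∧ (t = v ∨ T.horiz v t) := by
  obtain ⟨w, rfl⟩ := hu
  induction w generalizing y with
  | nil => exact ⟨y, ⟨[], rfl⟩, Or.inr h⟩
  | cons a w ih =>
    cases y with
    | nil => simpa using T.horiz_length _ _ h
    | cons b y =>
      rcases T.horiz_push a b _ _ h with rfl | h'
      · exact ⟨v, ⟨b :: w, rfl⟩, Or.inl rfl⟩
      · obtain ⟨t, hy, ht⟩ := ih h'
        exact ⟨t, Cone.cons_mem b hy, ht⟩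

theorem mem_shadowSet_horizBall_of_adj {x : X} {u y v : List X} (hu : u ∈ Cone (x :: v))
    (h : T.graph.Adj u y) : y ∈ shadowSet (T.horizBall v) := by
  have hv : v ∈ T.horizBall v := T.mem_horizBall_of_eq_or_horiz (Or.inl rfl)
  rcases h with h | ⟨a, rfl⟩ | ⟨a, rfl⟩
  · obtain ⟨t, hy, ht⟩ := T.exists_mem_cone_of_horiz (Cone.cons_subset x v hu) h
    exact Cone.subset_shadowSet (T.mem_horizBall_of_eq_or_horiz ht) hy
  · exact Cone.subset_shadowSet hv (Cone.cons_mem a (Cone.cons_subset x v hu))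
  · exact Cone.subset_shadowSet hv (Cone.of_cons_mem_cons hu)

/-- In the connected graph `T.graph`, distance `≥ 2` from the complement of `S(V)` just says
that no neighbour of `u` leaves `S(V)`. -/
theorem mem_umbraSet_of_forall_adj {V : Set (List X)} {u : List X} (hu : u ∈ shadowSet V)
    (hadj : ∀ y, T.graph.Adj u y → y ∈ shadowSet V) : u ∈ umbraSet T V := by
  refine ⟨hu, fun y hy => ?_⟩
  have hne : u ≠ y := fun h => hy (h ▸ hu)
  have hpos : T.graph.dist u y ≠ 0 := fun h =>
    hne ((T.graph_connected.preconnected u y).dist_eq_zero_iff.mp h)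
  have hone : T.graph.dist u y ≠ 1 := fun h =>
    hy (hadj y (SimpleGraph.dist_eq_one_iff_adj.mp h))
  omega

end AugmentedTree

theorem stmt13_general {X : Type*} (T : AugmentedTree X) (V : Set (List X))
    (v : List X)
    (hball : ∀ w : List X, w.length = v.length → T.graph.dist v w ≤ 1 → w ∈ V) :
    ∀ x : X, Cone (x :: v) ⊆ umbraSet T V := by
  intro x u hu
  have hball : T.horizBall v ⊆ V := fun w hw => hball w hw.1 hw.2
  have hvV : v ∈ V := hball (T.mem_horizBall_of_eq_or_horiz (Or.inl rfl))
  exact T.mem_umbraSet_of_forall_adj (Cone.subset_shadowSet hvV (Cone.cons_subset x v hu))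
    fun y hy => shadowSet_mono hball (T.mem_shadowSet_horizBall_of_adj hu hy)

/-- Unit ball inside implies umbra is nonempty: if the horizontal unit ball
`B_hor(v, 1)` is contained in the horizontal vertex set `V`, then for every letter
`x ∈ X` the cone `C_{xv}` is contained in the umbra `U(V)`. -/
theorem stmt13 {X : Type*} (T : AugmentedTree X) (n : ℕ) (V : Set (List X))
    (hV : ∀ v ∈ V, v.length = n) (v : List X) (hv : v.length = n)
    (hball : ∀ w : List X, w.length = v.length → T.graph.dist v w ≤ 1 → w ∈ V) :
    ∀ x : X, Cone (x :: v) ⊆ umbraSet T V :=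
  stmt13_general T V v hball
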